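/- arXiv:2310.08473 — 2 statements merged into one kernel-verified Lean document; each statement's English description precedes it below -/
import Mathlib

section
/- Limit points of no-Φ-regret play are separable quantum Φ-equilibria (Theorem 3.1(a)): Fix a k-player quantum game with utility tensors R_i and, for each player i, a family Φ_i of linear maps on n_i×n_i complex matrices. Let ρ^t = ⊗_i ρ_i^t (t ∈ ℕ) be product profiles, let ρ̄(T) = (1/T)·Σ_{t=1}^T ρ^t, and suppose there is a sequence ε(T) → 0 such that for every T, every player i, and every φ_i ∈ Φ_i, (1/T)·Σ_{t=1}^T [Tr(R_i·(φ_i⊗id_{-i})(ρ^t)) − Tr(R_i·ρ^t)] ≤ ε(T). Then every limit point ρ* of the sequence (ρ̄(T))_T lies in the closed convex hull of the set of product profiles, and satisfies Tr(R_i·(φ_i⊗id_{-i})(ρ*)) ≤ Tr(R_i·ρ*) for every player i and every φ_i ∈ Φ_i. -/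
open Matrix Filter
open scoped ComplexOrder Topology

/-- A density matrix: positive semidefinite with trace 1. -/
def IsDensity {d : Type*} [Fintype d] (ρ : Matrix d d ℂ) : Prop :=
  ρ.PosSemidef ∧ ρ.trace = 1

/-- The product profile `⊗ᵢ ρᵢ`. -/
noncomputable def prodProfile {k : ℕ} {n : Fin k → ℕ}
    (ρ : ∀ i, Matrix (Fin (n i)) (Fin (n i)) ℂ) :
    Matrix (∀ j, Fin (n j)) (∀ j, Fin (n j)) ℂ :=
  fun s s' => ∏ j, ρ j (s j) (s' j)

/-- The slicewise extension `φ ⊗ id₋ᵢ` of a map `φ` on player `i`'s register. -/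
def extendMap {k : ℕ} {n : Fin k → ℕ} (i : Fin k)
    (φ : Matrix (Fin (n i)) (Fin (n i)) ℂ → Matrix (Fin (n i)) (Fin (n i)) ℂ)
    (M : Matrix (∀ j, Fin (n j)) (∀ j, Fin (n j)) ℂ) :
    Matrix (∀ j, Fin (n j)) (∀ j, Fin (n j)) ℂ :=
  fun s s' =>
    φ (fun a a' => M (Function.update s i a) (Function.update s' i a')) (s i) (s' i)

/-!
The running averages `ρ̄(T)` are convex combinations of product profiles, so every cluster point
lies in the closure of their convex hull. For a fixed deviation `φ`, the regret
`M ↦ Re Tr(R (φ ⊗ id) M) - Re Tr(R M)` is a real-linear functional on matrices; by linearity its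
value at `ρ̄(T)` is the time-averaged regret, hence at most `ε(T)`, and by continuity its value at a
cluster point is at most `lim ε(T) = 0`.
-/

open Finset

theorem Convex.one_div_smul_sum_range_mem {E : Type*} [AddCommGroup E] [Module ℝ E] {s : Set E}
    (hs : Convex ℝ s) {x : ℕ → E} {T : ℕ} (hT : 0 < T) (hx : ∀ t ∈ range T, x t ∈ s) :
    (1 / (T : ℝ)) • ∑ t ∈ range T, x t ∈ s := by
  rw [smul_sum]
  refine hs.sum_mem (fun _ _ => by positivity) ?_ hx
  rw [sum_const, card_range, nsmul_eq_mul, mul_one_div_cancel (by exact_mod_cast hT.ne')]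

theorem le_zero_of_mapClusterPt_of_le_tendsto_zero {α : Type*} {l : Filter α} {u ε : α → ℝ}
    {a : ℝ} (ha : MapClusterPt a l u) (hε : Tendsto ε l (𝓝 0)) (hu : ∀ᶠ x in l, u x ≤ ε x) :
    a ≤ 0 := by
  refine le_of_forall_pos_le_add fun δ hδ => ?_
  have hδ_bound : ∀ᶠ x in l, u x ≤ 0 + δ := by
    filter_upwards [hu, hε.eventually (eventually_le_nhds (by simpa using hδ))] with x h₁ h₂
    linarith
  exact isClosed_Iic.mem_of_mapClusterPt ha hδ_bound

section

variable {k : ℕ} {n : Fin k → ℕ}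

def extendMapₗ (i : Fin k)
    (φ : Matrix (Fin (n i)) (Fin (n i)) ℂ →ₗ[ℂ] Matrix (Fin (n i)) (Fin (n i)) ℂ) :
    Matrix (∀ j, Fin (n j)) (∀ j, Fin (n j)) ℂ →ₗ[ℂ] Matrix (∀ j, Fin (n j)) (∀ j, Fin (n j)) ℂ where
  toFun := extendMap i φ
  map_add' M N := by
    ext s s'
    exact congrFun (congrFun (φ.map_add _ _) (s i)) (s' i)
  map_smul' c M := by
    ext s s'
    exact congrFun (congrFun (φ.map_smul c _) (s i)) (s' i)

@[simp]
theorem coe_extendMapₗ (i : Fin k)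
    (φ : Matrix (Fin (n i)) (Fin (n i)) ℂ →ₗ[ℂ] Matrix (Fin (n i)) (Fin (n i)) ℂ) :
    ⇑(extendMapₗ i φ) = extendMap i φ :=
  rfl

end

section

variable {ι : Type*} [Fintype ι]

noncomputable def deviationGain (A : Matrix ι ι ℂ) (E : Matrix ι ι ℂ →ₗ[ℂ] Matrix ι ι ℂ) :
    Matrix ι ι ℂ →ₗ[ℝ] ℝ :=
  Complex.reLm ∘ₗ
    (traceLinearMap ι ℂ ℂ ∘ₗ LinearMap.mulLeft ℂ A ∘ₗ (E - LinearMap.id)).restrictScalars ℝ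

theorem deviationGain_apply (A : Matrix ι ι ℂ) (E : Matrix ι ι ℂ →ₗ[ℂ] Matrix ι ι ℂ)
    (M : Matrix ι ι ℂ) :
    deviationGain A E M = (A * E M).trace.re - (A * M).trace.re := by
  simp [deviationGain, Matrix.mul_sub]

end

theorem stmt_3_general {k : ℕ} {n : Fin k → ℕ}
    (R : ∀ _ : Fin k, Matrix (∀ j, Fin (n j)) (∀ j, Fin (n j)) ℂ)
    (Φ : ∀ i : Fin k, Set (Matrix (Fin (n i)) (Fin (n i)) ℂ →ₗ[ℂ] Matrix (Fin (n i)) (Fin (n i)) ℂ))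
    (ρ : ℕ → ∀ i, Matrix (Fin (n i)) (Fin (n i)) ℂ)
    (hρ : ∀ t i, IsDensity (ρ t i))
    (ε : ℕ → ℝ) (hε : Tendsto ε atTop (𝓝 0))
    (hreg : ∀ T : ℕ, 0 < T → ∀ i, ∀ φ ∈ Φ i,
      (1 / (T : ℝ)) * ∑ t ∈ Finset.range T,
          (((R i * extendMap i (⇑φ) (prodProfile (ρ t))).trace).re
            - ((R i * prodProfile (ρ t)).trace).re) ≤ ε T)
    (ρstar : Matrix (∀ j, Fin (n j)) (∀ j, Fin (n j)) ℂ)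
    (hcluster : MapClusterPt ρstar atTop
      (fun T : ℕ => (1 / (T : ℂ)) • ∑ t ∈ Finset.range T, prodProfile (ρ t))) :
    ρstar ∈ closure (convexHull ℝ
        {M | ∃ σ : ∀ i, Matrix (Fin (n i)) (Fin (n i)) ℂ,
          (∀ i, IsDensity (σ i)) ∧ M = prodProfile σ})
    ∧ ∀ i, ∀ φ ∈ Φ i,
        ((R i * extendMap i (⇑φ) ρstar).trace).re ≤ ((R i * ρstar).trace).re := by
  have havg (T : ℕ) : (1 / (T : ℂ)) • ∑ t ∈ range T, prodProfile (ρ t)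
      = (1 / (T : ℝ)) • ∑ t ∈ range T, prodProfile (ρ t) := by
    rw [← Complex.coe_smul]; push_cast; rfl
  refine ⟨isClosed_closure.mem_of_mapClusterPt hcluster ?_, fun i φ hφ => ?_⟩
  · filter_upwards [eventually_gt_atTop 0] with T hT
    rw [havg]
    exact subset_closure <| (convex_convexHull ℝ _).one_div_smul_sum_range_mem hT
      fun t _ => subset_convexHull ℝ _ ⟨ρ t, hρ t, rfl⟩
  · have hgain := hcluster.continuousAt_comp
      (deviationGain (R i) (extendMapₗ i φ)).continuous_of_finiteDimensional.continuousAt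
    have := le_zero_of_mapClusterPt_of_le_tendsto_zero hgain hε <| by
      filter_upwards [eventually_gt_atTop 0] with T hT
      rw [Function.comp_apply, havg, map_smul, map_sum, smul_eq_mul]
      simpa only [deviationGain_apply, coe_extendMapₗ] using hreg T hT i φ hφ
    simpa [deviationGain_apply, sub_nonpos] using this

/-- Limit points of no-Φ-regret play are separable quantum Φ-equilibria (Theorem 3.1(a)). -/
theorem stmt_3 {k : ℕ} {n : Fin k → ℕ}
    (R : ∀ _ : Fin k, Matrix (∀ j, Fin (n j)) (∀ j, Fin (n j)) ℂ)
    (hR : ∀ i, (R i).IsHermitian)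
    (Φ : ∀ i : Fin k, Set (Matrix (Fin (n i)) (Fin (n i)) ℂ →ₗ[ℂ] Matrix (Fin (n i)) (Fin (n i)) ℂ))
    (ρ : ℕ → ∀ i, Matrix (Fin (n i)) (Fin (n i)) ℂ)
    (hρ : ∀ t i, IsDensity (ρ t i))
    (ε : ℕ → ℝ) (hε : Tendsto ε atTop (𝓝 0))
    (hreg : ∀ T : ℕ, 0 < T → ∀ i, ∀ φ ∈ Φ i,
      (1 / (T : ℝ)) * ∑ t ∈ Finset.range T,
          (((R i * extendMap i (⇑φ) (prodProfile (ρ t))).trace).re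
            - ((R i * prodProfile (ρ t)).trace).re) ≤ ε T)
    (ρstar : Matrix (∀ j, Fin (n j)) (∀ j, Fin (n j)) ℂ)
    (hcluster : MapClusterPt ρstar atTop
      (fun T : ℕ => (1 / (T : ℂ)) • ∑ t ∈ Finset.range T, prodProfile (ρ t))) :
    ρstar ∈ closure (convexHull ℝ
        {M | ∃ σ : ∀ i, Matrix (Fin (n i)) (Fin (n i)) ℂ,
          (∀ i, IsDensity (σ i)) ∧ M = prodProfile σ})
    ∧ ∀ i, ∀ φ ∈ Φ i,
        ((R i * extendMap i (⇑φ) ρstar).trace).re ≤ ((R i * ρstar).trace).re :=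
  stmt_3_general R Φ ρ hρ ε hε hreg ρstar hcluster
end

section
/- No-regret learning converges to quantum Nash equilibria in polymatrix quantum zero-sum games (Theorem 5.4, finite-horizon form): Consider a polymatrix quantum game on k players with edge set E and edge utility tensors R_{ij}, with player utilities u_i(ρ) = Σ_{j:(i,j)∈E} Tr(R_{ij}·ρ_{ij}), and suppose the game is zero-sum: Σ_{i=1}^k u_i(ρ) = 0 for every joint density matrix ρ. Let ρ_i^t (t = 1,…,T) be density matrices on ℂ^{n_i} for each player i, write ρ^t = ⊗_i ρ_i^t, and suppose every player has time-averaged external regret at most ε: for every player i and every density matrix ρ_i' on ℂ^{n_i}, (1/T)·Σ_{t=1}^T u_i(ρ_i' ⊗ (⊗_{j≠i} ρ_j^t)) ≤ (1/T)·Σ_{t=1}^T u_i(ρ^t) + ε. Then, setting ρ̄_i = (1/T)·Σ_{t=1}^T ρ_i^t, the product profile ⊗_i ρ̄_i is a kε-approximate quantum Nash equilibrium: for every player i and every density matrix ρ_i' on ℂ^{n_i}, u_i(ρ_i' ⊗ (⊗_{j≠i} ρ̄_j)) ≤ u_i(⊗_j ρ̄_j) + kε. -/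
open Matrix
open scoped ComplexOrder

/-- The two-player marginal `ρ_{ij}` of a joint matrix `ρ`. -/
noncomputable def marg2 {k : ℕ} {n : Fin k → ℕ} (i j : Fin k)
    (ρ : Matrix (∀ l, Fin (n l)) (∀ l, Fin (n l)) ℂ) :
    Matrix (Fin (n i) × Fin (n j)) (Fin (n i) × Fin (n j)) ℂ :=
  fun ab a'b' => ∑ s : ∀ l, Fin (n l),
    if s i = ab.1 ∧ s j = ab.2 then
      ρ s (Function.update (Function.update s i a'b'.1) j a'b'.2)
    else 0

/-- Player `i`'s polymatrix utility `u_i(ρ) = Σ_{j:(i,j)∈E} Tr(R_{ij}·ρ_{ij})`. -/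
noncomputable def uPoly {k : ℕ} {n : Fin k → ℕ} (E : Finset (Fin k × Fin k))
    (R : ∀ i j : Fin k, Matrix (Fin (n i) × Fin (n j)) (Fin (n i) × Fin (n j)) ℂ)
    (i : Fin k) (ρ : Matrix (∀ l, Fin (n l)) (∀ l, Fin (n l)) ℂ) : ℝ :=
  (∑ j ∈ Finset.univ.filter (fun j => (i, j) ∈ E), (R i j * marg2 i j ρ).trace).re

/-! Two-player marginals of a product profile are Kronecker products of its factors, so
against product profiles a player's utility is affine in each opponent's strategy. Hence
the utility of any unilateral deviation from the averaged profile `ρ̄` is the time average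
of the per-round utilities of that deviation, and no regret bounds it by the player's average
payoff `Aᵢ` plus `ε`. Deviating to `ρ̄ᵢ` itself gives `uₘ(ρ̄) ≤ Aₘ + ε` for every `m`; since
both `∑ₘ uₘ(ρ̄)` and `∑ₘ Aₘ` vanish by the zero-sum property, `uᵢ(ρ̄) ≥ Aᵢ - (k - 1)ε`,
and the deviation gains at most `kε`. -/

open Finset Function
open scoped Kronecker

namespace Matrix

theorem kronecker_sum {α ι l m p q : Type*} [NonUnitalNonAssocSemiring α] (A : Matrix l m α)
    (s : Finset ι) (B : ι → Matrix p q α) : A ⊗ₖ (∑ t ∈ s, B t) = ∑ t ∈ s, A ⊗ₖ B t := by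
  ext
  simp [kroneckerMap_apply, sum_apply, mul_sum]

end Matrix

section ProductProfile

variable {k : ℕ} {n : Fin k → ℕ}

theorem trace_prodProfile (σ : ∀ l, Matrix (Fin (n l)) (Fin (n l)) ℂ) :
    (prodProfile σ).trace = ∏ l, (σ l).trace := by
  simp only [trace, Matrix.diag, prodProfile, Fintype.prod_sum]

theorem prodProfile_mul (σ τ : ∀ l, Matrix (Fin (n l)) (Fin (n l)) ℂ) :
    prodProfile (fun l => σ l * τ l) = prodProfile σ * prodProfile τ := by
  ext s s'
  simp only [prodProfile, mul_apply, Fintype.prod_sum, prod_mul_distrib]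

theorem conjTranspose_prodProfile (σ : ∀ l, Matrix (Fin (n l)) (Fin (n l)) ℂ) :
    (prodProfile σ)ᴴ = prodProfile (fun l => (σ l)ᴴ) := by
  ext s s'
  simp [prodProfile, conjTranspose_apply]

open scoped MatrixOrder in
theorem Matrix.PosSemidef.prodProfile {σ : ∀ l, Matrix (Fin (n l)) (Fin (n l)) ℂ}
    (h : ∀ l, (σ l).PosSemidef) : (prodProfile σ).PosSemidef := by
  choose B hB using fun l => CStarAlgebra.nonneg_iff_eq_star_mul_self.mp (h l).nonneg
  simp only [funext hB, star_eq_conjTranspose, prodProfile_mul, ← conjTranspose_prodProfile]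
  exact posSemidef_conjTranspose_mul_self _

theorem IsDensity.prodProfile {σ : ∀ l, Matrix (Fin (n l)) (Fin (n l)) ℂ}
    (h : ∀ l, IsDensity (σ l)) : IsDensity (prodProfile σ) :=
  ⟨.prodProfile fun l => (h l).1, by simp [trace_prodProfile, fun l => (h l).2]⟩

theorem marg2_prodProfile {i j : Fin k} (hij : i ≠ j)
    {σ : ∀ l, Matrix (Fin (n l)) (Fin (n l)) ℂ} (hσ : ∀ l, (σ l).trace = 1) :
    marg2 i j (prodProfile σ) = σ i ⊗ₖ σ j := by
  ext ⟨a, b⟩ ⟨a', b'⟩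
  -- the constraint `s i = a ∧ s j = b` is absorbed into the factors at `i` and `j`,
  -- after which the sum over `s` factorizes coordinatewise
  set h : ∀ l, Fin (n l) → ℂ := update (update (fun l x => σ l x x) i
    fun x => if x = a then σ i a a' else 0) j fun x => if x = b then σ j b b' else 0
  have hsummand : ∀ s : ∀ l, Fin (n l), (if s i = a ∧ s j = b then
      prodProfile σ s (update (update s i a') j b') else 0) = ∏ l, h l (s l) := by
    intro s
    split_ifs with hs
    · obtain ⟨rfl, rfl⟩ := hs
      refine prod_congr rfl fun l _ => ?_
      rcases eq_or_ne l j with rfl | hlj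
      · simp [h]
      rcases eq_or_ne l i with rfl | hli
      · simp [h, hlj]
      · simp [h, hlj, hli]
    · rw [not_and_or] at hs
      rcases hs with hs | hs
      · exact (prod_eq_zero (mem_univ i) (by simp [h, hij, hs])).symm
      · exact (prod_eq_zero (mem_univ j) (by simp [h, hs])).symm
  have hfactor : (fun l => ∑ x, h l x) =
      update (update (fun _ => 1) i (σ i a a')) j (σ j b b') := by
    ext l
    rcases eq_or_ne l j with rfl | hlj
    · simp [h]
    rcases eq_or_ne l i with rfl | hli
    · simp [h, hlj]
    · simpa [h, hlj, hli, trace] using hσ l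
  simp only [marg2, hsummand, ← Fintype.prod_sum]
  simp [hfactor, prod_update_of_mem, hij, mul_comm]

end ProductProfile

theorem IsDensity.average {d : Type*} [Fintype d] {T : ℕ} (hT : 0 < T)
    {ρ : Fin T → Matrix d d ℂ} (hρ : ∀ t, IsDensity (ρ t)) :
    IsDensity ((1 / (T : ℂ)) • ∑ t, ρ t) := by
  refine ⟨(posSemidef_sum _ fun t _ => (hρ t).1).smul ?_, ?_⟩
  · positivity
  · simp [trace_sum, fun t => (hρ t).2, hT.ne']

section Utility

variable {k : ℕ} {n : Fin k → ℕ} (E : Finset (Fin k × Fin k))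
  (R : ∀ i j : Fin k, Matrix (Fin (n i) × Fin (n j)) (Fin (n i) × Fin (n j)) ℂ)

theorem uPoly_prodProfile (hE : ∀ p ∈ E, p.1 ≠ p.2) (i : Fin k)
    {σ : ∀ l, Matrix (Fin (n l)) (Fin (n l)) ℂ} (hσ : ∀ l, (σ l).trace = 1) :
    uPoly E R i (prodProfile σ) =
      ∑ j ∈ univ.filter (fun j => (i, j) ∈ E), (R i j * (σ i ⊗ₖ σ j)).trace.re := by
  rw [uPoly, Complex.re_sum]
  refine sum_congr rfl fun j hj => ?_
  rw [marg2_prodProfile (hE (i, j) (mem_filter.mp hj).2) hσ]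

theorem uPoly_update_prodProfile (hE : ∀ p ∈ E, p.1 ≠ p.2) (i : Fin k)
    {σ : ∀ l, Matrix (Fin (n l)) (Fin (n l)) ℂ} (hσ : ∀ l, (σ l).trace = 1)
    {τ : Matrix (Fin (n i)) (Fin (n i)) ℂ} (hτ : τ.trace = 1) :
    uPoly E R i (prodProfile (update σ i τ)) =
      ∑ j ∈ univ.filter (fun j => (i, j) ∈ E), (R i j * (τ ⊗ₖ σ j)).trace.re := by
  rw [uPoly_prodProfile E R hE i (forall_update_iff σ (p := fun l m => m.trace = 1) |>.mpr
    ⟨hτ, fun l _ => hσ l⟩)]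
  refine sum_congr rfl fun j hj => ?_
  rw [update_self, update_of_ne (hE (i, j) (mem_filter.mp hj).2).symm]

theorem uPoly_update_average (hE : ∀ p ∈ E, p.1 ≠ p.2) {T : ℕ} (hT : 0 < T)
    {ρ : Fin T → ∀ l, Matrix (Fin (n l)) (Fin (n l)) ℂ} (hρ : ∀ t l, (ρ t l).trace = 1)
    (i : Fin k) {τ : Matrix (Fin (n i)) (Fin (n i)) ℂ} (hτ : τ.trace = 1) :
    uPoly E R i (prodProfile (update (fun l => (1 / (T : ℂ)) • ∑ t, ρ t l) i τ)) =
      1 / (T : ℝ) * ∑ t, uPoly E R i (prodProfile (update (ρ t) i τ)) := by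
  have hbar : ∀ l, ((1 / (T : ℂ)) • ∑ t, ρ t l).trace = 1 := fun l => by
    simp [trace_sum, hρ _ l, hT.ne']
  have hcast : (1 / (T : ℂ)) = ((1 / (T : ℝ) : ℝ) : ℂ) := by push_cast; rfl
  rw [uPoly_update_prodProfile E R hE i hbar hτ, sum_congr rfl fun t _ =>
    uPoly_update_prodProfile E R hE i (hρ t) hτ, sum_comm, mul_sum]
  refine sum_congr rfl fun j _ => ?_
  rw [kronecker_smul, kronecker_sum, Matrix.mul_smul, Matrix.mul_sum, trace_smul, trace_sum,
    smul_eq_mul, hcast, Complex.re_ofReal_mul, Complex.re_sum]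

end Utility

theorem le_add_card_mul_of_sum_eq_zero {ι : Type*} [Fintype ι] {x a : ι → ℝ} {ε : ℝ}
    (hx : ∑ m, x m = 0) (ha : ∑ m, a m = 0) (h : ∀ m, x m ≤ a m + ε) (i : ι) :
    a i + ε ≤ x i + Fintype.card ι * ε := by
  have := single_le_sum (f := fun m => a m + ε - x m) (fun m _ => by linarith [h m]) (mem_univ i)
  simp only [sum_sub_distrib, sum_add_distrib, sum_const, card_univ, nsmul_eq_mul, hx, ha] at this
  linarith

theorem stmt_9_general {k : ℕ} {n : Fin k → ℕ} (E : Finset (Fin k × Fin k))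
    (hE : ∀ p ∈ E, p.1 ≠ p.2)
    (R : ∀ i j : Fin k, Matrix (Fin (n i) × Fin (n j)) (Fin (n i) × Fin (n j)) ℂ)
    (hzero : ∀ ρ : Matrix (∀ l, Fin (n l)) (∀ l, Fin (n l)) ℂ, IsDensity ρ →
      ∑ i, uPoly E R i ρ = 0)
    (T : ℕ) (hT : 0 < T)
    (ρ : Fin T → ∀ i, Matrix (Fin (n i)) (Fin (n i)) ℂ)
    (hρ : ∀ t i, IsDensity (ρ t i))
    (ε : ℝ)
    (hreg : ∀ i, ∀ ρ' : Matrix (Fin (n i)) (Fin (n i)) ℂ, IsDensity ρ' →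
      (1 / (T : ℝ)) * ∑ t, uPoly E R i (prodProfile (Function.update (ρ t) i ρ'))
        ≤ (1 / (T : ℝ)) * ∑ t, uPoly E R i (prodProfile (ρ t)) + ε) :
    ∀ i, ∀ ρ' : Matrix (Fin (n i)) (Fin (n i)) ℂ, IsDensity ρ' →
      uPoly E R i (prodProfile
          (Function.update (fun l => (1 / (T : ℂ)) • ∑ t, ρ t l) i ρ'))
        ≤ uPoly E R i (prodProfile (fun l => (1 / (T : ℂ)) • ∑ t, ρ t l)) + k * ε := by
  intro i ρ' hρ'
  have htr : ∀ t l, (ρ t l).trace = 1 := fun t l => (hρ t l).2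
  have hbar : ∀ l, IsDensity ((1 / (T : ℂ)) • ∑ t, ρ t l) := fun l =>
    .average hT fun t => hρ t l
  have hA : ∑ m, 1 / (T : ℝ) * ∑ t, uPoly E R m (prodProfile (ρ t)) = 0 := by
    rw [← mul_sum, sum_comm, sum_congr rfl fun t _ => hzero _ (.prodProfile (hρ t))]
    simp
  have hself : ∀ m, uPoly E R m (prodProfile fun l => (1 / (T : ℂ)) • ∑ t, ρ t l) ≤
      1 / (T : ℝ) * ∑ t, uPoly E R m (prodProfile (ρ t)) + ε := fun m => by
    have := uPoly_update_average E R hE hT htr m (hbar m).2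
    rw [update_eq_self] at this
    rw [this]
    exact hreg m _ (hbar m)
  have hdev := hreg i ρ' hρ'
  rw [← uPoly_update_average E R hE hT htr i hρ'.2] at hdev
  have hnash := le_add_card_mul_of_sum_eq_zero (hzero _ (.prodProfile hbar)) hA hself i
  rw [Fintype.card_fin] at hnash
  linarith

/-- No-regret learning converges to quantum Nash equilibria in polymatrix quantum
zero-sum games (Theorem 5.4, finite-horizon form). -/
theorem stmt_9 {k : ℕ} {n : Fin k → ℕ} (E : Finset (Fin k × Fin k))
    (hE : ∀ p ∈ E, p.1 ≠ p.2)
    (R : ∀ i j : Fin k, Matrix (Fin (n i) × Fin (n j)) (Fin (n i) × Fin (n j)) ℂ)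
    (hR : ∀ i j, (R i j).IsHermitian)
    (hzero : ∀ ρ : Matrix (∀ l, Fin (n l)) (∀ l, Fin (n l)) ℂ, IsDensity ρ →
      ∑ i, uPoly E R i ρ = 0)
    (T : ℕ) (hT : 0 < T)
    (ρ : Fin T → ∀ i, Matrix (Fin (n i)) (Fin (n i)) ℂ)
    (hρ : ∀ t i, IsDensity (ρ t i))
    (ε : ℝ)
    (hreg : ∀ i, ∀ ρ' : Matrix (Fin (n i)) (Fin (n i)) ℂ, IsDensity ρ' →
      (1 / (T : ℝ)) * ∑ t, uPoly E R i (prodProfile (Function.update (ρ t) i ρ'))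
        ≤ (1 / (T : ℝ)) * ∑ t, uPoly E R i (prodProfile (ρ t)) + ε) :
    ∀ i, ∀ ρ' : Matrix (Fin (n i)) (Fin (n i)) ℂ, IsDensity ρ' →
      uPoly E R i (prodProfile
          (Function.update (fun l => (1 / (T : ℂ)) • ∑ t, ρ t l) i ρ'))
        ≤ uPoly E R i (prodProfile (fun l => (1 / (T : ℂ)) • ∑ t, ρ t l)) + k * ε :=
  stmt_9_general E hE R hzero T hT ρ hρ ε hreg
end
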